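/- Let δ > 0 and let x : [t₁,∞) → ℝ⁴, x(t) = (a(t), u(t), v(t), w(t)), be continuously differentiable. Define the good set K = {(a,u,v,w) : |a| < δ ∨ (|u| ≥ δ ∧ |v| ≥ δ ∧ |w| ≥ δ)}. Assume the outward-pointing conditions: whenever |a(t)| = δ and min(|u(t)|,|v(t)|,|w(t)|) ≤ δ, then sgn(a(t))·a'(t) ≤ 0; and whenever |a(t)| ≥ δ and |u(t)| = δ with |v(t)| ≥ δ, |w(t)| ≥ δ, then sgn(u(t))·u'(t) ≥ 0 (and symmetric conditions for v and w). Moreover assume the strict version of these inequalities (strict inequality) at all boundary points. If x(t₁) ∈ K, then x(t) ∈ K for all t ≥ t₁. -/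

import Mathlib

open Filter Topology

lemma slope_left_gt {f : ℝ → ℝ} {d T : ℝ} (hf : HasDerivAt f d T) (h : d < 0) :
    ∀ᶠ s in 𝓝[<] T, f T < f s := by
  have h1 := hasDerivAt_iff_tendsto_slope.mp hf
  have h2 : ∀ᶠ s in 𝓝[≠] T, slope f T s < 0 := h1.eventually (gt_mem_nhds h)
  have h3 : 𝓝[<] T ≤ 𝓝[≠] T := nhdsWithin_mono _ (fun x hx => ne_of_lt hx)
  filter_upwards [h3 h2, self_mem_nhdsWithin] with s hs hs'
  rw [slope_def_field] at hs
  rcases div_neg_iff.mp hs with ⟨h4, h5⟩ | ⟨h4, h5⟩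
  · linarith
  · exfalso; simp at hs'; linarith

lemma slope_right_gt {f : ℝ → ℝ} {d T : ℝ} (hf : HasDerivAt f d T) (h : 0 < d) :
    ∀ᶠ s in 𝓝[>] T, f T < f s := by
  have h1 := hasDerivAt_iff_tendsto_slope.mp hf
  have h2 : ∀ᶠ s in 𝓝[≠] T, 0 < slope f T s := h1.eventually (lt_mem_nhds h)
  have h3 : 𝓝[>] T ≤ 𝓝[≠] T := nhdsWithin_mono _ (fun x hx => ne_of_gt hx)
  filter_upwards [h3 h2, self_mem_nhdsWithin] with s hs hs'
  rw [slope_def_field] at hs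
  rcases div_pos_iff.mp hs with ⟨h4, h5⟩ | ⟨h4, h5⟩
  · linarith
  · exfalso; simp at hs'; linarith

lemma freq_abs_le {δ T : ℝ} {f : ℝ → ℝ} {l : Filter ℝ} [l.NeBot] (hl : l ≤ 𝓝 T)
    (hf : ContinuousAt f T) (h : ∃ᶠ s in l, |f s| < δ) : |f T| ≤ δ := by
  by_contra hc
  push_neg at hc
  have hev : ∀ᶠ s in l, δ < |f s| := (hf.abs.eventually (lt_mem_nhds hc)).filter_mono hl
  obtain ⟨s, h1, h2⟩ := (h.and_eventually hev).exists
  linarith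

lemma freq_abs_ge {δ T : ℝ} {f : ℝ → ℝ} {l : Filter ℝ} [l.NeBot] (hl : l ≤ 𝓝 T)
    (hf : ContinuousAt f T) (h : ∃ᶠ s in l, δ ≤ |f s|) : δ ≤ |f T| := by
  by_contra hc
  push_neg at hc
  have hev : ∀ᶠ s in l, |f s| < δ := (hf.abs.eventually (gt_mem_nhds hc)).filter_mono hl
  obtain ⟨s, h1, h2⟩ := (h.and_eventually hev).exists
  linarith

lemma edge_contra {δ T : ℝ} (hδ : 0 < δ) {f : ℝ → ℝ} {d : ℝ}
    (hd : HasDerivAt f d T) (hfT : |f T| = δ)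
    (hdr : 0 < Real.sign (f T) * d)
    (hfreq : ∃ᶠ s in 𝓝[>] T, |f s| < δ) : False := by
  rcases (abs_eq hδ.le).mp hfT with h | h
  · have hs1 : Real.sign (f T) = 1 := Real.sign_of_pos (by rw [h]; exact hδ)
    rw [hs1, one_mul] at hdr
    have hev := slope_right_gt hd hdr
    obtain ⟨s, h1, h2⟩ := (hfreq.and_eventually hev).exists
    have := (abs_lt.mp h1).2
    rw [h] at h2; linarith
  · have hs1 : Real.sign (f T) = -1 := Real.sign_of_neg (by rw [h]; linarith)
    rw [hs1, neg_one_mul] at hdr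
    have hev := slope_right_gt hd.neg hdr
    obtain ⟨s, h1, h2⟩ := (hfreq.and_eventually hev).exists
    have := (abs_lt.mp h1).1
    have h2 : -f T < -f s := h2
    simp only [h] at h2; linarith



/-- The good (downward-closure) region for a single triad:
`|a| < δ` or all three edge weights are at least `δ` in absolute value. -/
def goodSet (δ : ℝ) : Set (ℝ × ℝ × ℝ × ℝ) :=
  {p | |p.1| < δ ∨ (δ ≤ |p.2.1| ∧ δ ≤ |p.2.2.1| ∧ δ ≤ |p.2.2.2|)}

/-- Single-triple invariance: under strict outward-pointing drift conditions
on the boundary faces, a trajectory starting in the good set `K` stays in `K`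
for all future time. -/
theorem single_triple_invariance (δ : ℝ) (hδ : 0 < δ) (t₁ : ℝ)
    (a u v w a' u' v' w' : ℝ → ℝ)
    (hda : ∀ t, t₁ ≤ t → HasDerivAt a (a' t) t)
    (hdu : ∀ t, t₁ ≤ t → HasDerivAt u (u' t) t)
    (hdv : ∀ t, t₁ ≤ t → HasDerivAt v (v' t) t)
    (hdw : ∀ t, t₁ ≤ t → HasDerivAt w (w' t) t)
    (hca : ContinuousOn a' (Set.Ici t₁)) (hcu : ContinuousOn u' (Set.Ici t₁))
    (hcv : ContinuousOn v' (Set.Ici t₁)) (hcw : ContinuousOn w' (Set.Ici t₁))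
    -- strict outward-pointing condition on the face |a| = δ
    (hX1 : ∀ t, t₁ ≤ t → |a t| = δ →
      min (|u t|) (min (|v t|) (|w t|)) ≤ δ → Real.sign (a t) * a' t < 0)
    -- strict outward-pointing conditions on the edge faces
    (hX2 : ∀ t, t₁ ≤ t → δ ≤ |a t| → |u t| = δ → δ ≤ |v t| → δ ≤ |w t| →
      0 < Real.sign (u t) * u' t)
    (hX3 : ∀ t, t₁ ≤ t → δ ≤ |a t| → |v t| = δ → δ ≤ |u t| → δ ≤ |w t| →
      0 < Real.sign (v t) * v' t)
    (hX4 : ∀ t, t₁ ≤ t → δ ≤ |a t| → |w t| = δ → δ ≤ |u t| → δ ≤ |v t| →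
      0 < Real.sign (w t) * w' t)
    (hinit : (a t₁, u t₁, v t₁, w t₁) ∈ goodSet δ) :
    ∀ t, t₁ ≤ t → (a t, u t, v t, w t) ∈ goodSet δ := by
  intro t ht
  by_contra hbadt
  set B : Set ℝ := {s | t₁ ≤ s ∧ s ≤ t ∧ (a s, u s, v s, w s) ∉ goodSet δ} with hBdef
  have htB : t ∈ B := ⟨ht, le_refl t, hbadt⟩
  have hBne : B.Nonempty := ⟨t, htB⟩
  have hBbd : BddBelow B := ⟨t₁, fun s hs => hs.1⟩
  set T := sInf B with hTdef
  have hT1 : t₁ ≤ T := le_csInf hBne fun s hs => hs.1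
  have hTt : T ≤ t := csInf_le hBbd htB
  have hpre : ∀ s, t₁ ≤ s → s < T → (a s, u s, v s, w s) ∈ goodSet δ := by
    intro s hs1 hsT
    by_contra hbad
    exact absurd (csInf_le hBbd ⟨hs1, le_trans hsT.le hTt, hbad⟩) (not_le.mpr hsT)
  have hdaT := hda T hT1
  have hduT := hdu T hT1
  have hdvT := hdv T hT1
  have hdwT := hdw T hT1
  by_cases hTB : (a T, u T, v T, w T) ∈ goodSet δ
  · -- the trajectory is good at T, but bad times accumulate from the right
    have hfreqB : ∃ᶠ s in 𝓝[>] T, s ∈ B := by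
      rw [frequently_iff]
      intro U hU
      obtain ⟨c, hc, hsub⟩ := mem_nhdsGT_iff_exists_Ioo_subset.mp hU
      have hlt : sInf B < c := hc
      obtain ⟨s, hsB, hsc⟩ := exists_lt_of_csInf_lt hBne hlt
      have hTs : T ≤ s := csInf_le hBbd hsB
      have hTs' : T < s := lt_of_le_of_ne hTs (by
        intro h
        exact hsB.2.2 (h ▸ hTB))
      exact ⟨s, hsub ⟨hTs', hsc⟩, hsB⟩
    have hfreq' : ∃ᶠ s in 𝓝[>] T,
        δ ≤ |a s| ∧ (|u s| < δ ∨ |v s| < δ ∨ |w s| < δ) := by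
      refine hfreqB.mono ?_
      intro s hs
      have hbad := hs.2.2
      simp only [goodSet, Set.mem_setOf_eq, not_or] at hbad
      refine ⟨not_lt.mp hbad.1, ?_⟩
      rcases lt_or_ge (|u s|) δ with h | h
      · exact Or.inl h
      rcases lt_or_ge (|v s|) δ with h' | h'
      · exact Or.inr (Or.inl h')
      rcases lt_or_ge (|w s|) δ with h'' | h''
      · exact Or.inr (Or.inr h'')
      · exact absurd ⟨h, h', h''⟩ hbad.2
    have haT : δ ≤ |a T| :=
      freq_abs_ge nhdsWithin_le_nhds hdaT.continuousAt (hfreq'.mono fun s hs => hs.1)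
    have hedges : δ ≤ |u T| ∧ δ ≤ |v T| ∧ δ ≤ |w T| := by
      rcases hTB with h | h
      · exact absurd h (not_lt.mpr haT)
      · exact h
    have hfreq'' : ∃ᶠ s in 𝓝[>] T, |u s| < δ ∨ |v s| < δ ∨ |w s| < δ :=
      hfreq'.mono fun s hs => hs.2
    rw [frequently_or_distrib] at hfreq''
    rcases hfreq'' with hfu | hfvw
    · have huTeq : |u T| = δ :=
        le_antisymm (freq_abs_le nhdsWithin_le_nhds hduT.continuousAt hfu) hedges.1
      exact edge_contra hδ hduT huTeq
        (hX2 T hT1 haT huTeq hedges.2.1 hedges.2.2) hfu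
    rw [frequently_or_distrib] at hfvw
    rcases hfvw with hfv | hfw
    · have hvTeq : |v T| = δ :=
        le_antisymm (freq_abs_le nhdsWithin_le_nhds hdvT.continuousAt hfv) hedges.2.1
      exact edge_contra hδ hdvT hvTeq
        (hX3 T hT1 haT hvTeq hedges.1 hedges.2.2) hfv
    · have hwTeq : |w T| = δ :=
        le_antisymm (freq_abs_le nhdsWithin_le_nhds hdwT.continuousAt hfw) hedges.2.2
      exact edge_contra hδ hdwT hwTeq
        (hX4 T hT1 haT hwTeq hedges.1 hedges.2.1) hfw
  · -- the trajectory is bad at T itself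
    have hT1' : t₁ < T := lt_of_le_of_ne hT1 (by
      intro h
      exact hTB (h ▸ hinit))
    simp only [goodSet, Set.mem_setOf_eq, not_or] at hTB
    have hna : δ ≤ |a T| := not_lt.mp hTB.1
    have hnedge := hTB.2
    have hgT : min (|u T|) (min (|v T|) (|w T|)) < δ := by
      rcases lt_or_ge (|u T|) δ with h | h
      · exact lt_of_le_of_lt (min_le_left _ _) h
      rcases lt_or_ge (|v T|) δ with h' | h'
      · exact lt_of_le_of_lt (le_trans (min_le_right _ _) (min_le_left _ _)) h'
      rcases lt_or_ge (|w T|) δ with h'' | h''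
      · exact lt_of_le_of_lt (le_trans (min_le_right _ _) (min_le_right _ _)) h''
      · exact absurd ⟨h, h', h''⟩ hnedge
    have hgcont : ContinuousAt (fun s => min (|u s|) (min (|v s|) (|w s|))) T :=
      (hduT.continuousAt.abs).min ((hdvT.continuousAt.abs).min (hdwT.continuousAt.abs))
    have hev : ∀ᶠ s in 𝓝[<] T, |a s| < δ := by
      have h1 : ∀ᶠ s in 𝓝 T, min (|u s|) (min (|v s|) (|w s|)) < δ :=
        hgcont.eventually (gt_mem_nhds hgT)
      have h2 : ∀ᶠ s in 𝓝 T, t₁ < s := lt_mem_nhds hT1'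
      filter_upwards [nhdsWithin_le_nhds h1, nhdsWithin_le_nhds h2,
        self_mem_nhdsWithin] with s hs1 hs2 hs3
      have hgood := hpre s hs2.le hs3
      simp only [goodSet, Set.mem_setOf_eq] at hgood
      rcases hgood with h | h
      · exact h
      · exact absurd (le_min h.1 (le_min h.2.1 h.2.2)) (not_le.mpr hs1)
    have haTle : |a T| ≤ δ := by
      have htend : Filter.Tendsto (fun s => |a s|) (𝓝[<] T) (𝓝 (|a T|)) :=
        (hdaT.continuousAt.abs).tendsto.mono_left nhdsWithin_le_nhds
      exact le_of_tendsto htend (hev.mono fun s hs => hs.le)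
    have haTeq : |a T| = δ := le_antisymm haTle hna
    have hdrift := hX1 T hT1 haTeq hgT.le
    rcases (abs_eq hδ.le).mp haTeq with hpos | hneg
    · have hs1 : Real.sign (a T) = 1 := Real.sign_of_pos (by rw [hpos]; exact hδ)
      rw [hs1, one_mul] at hdrift
      have hleft := slope_left_gt hdaT hdrift
      obtain ⟨s, h1, h2⟩ := (hev.and hleft).exists
      have := (abs_lt.mp h1).2
      rw [hpos] at h2; linarith
    · have hs1 : Real.sign (a T) = -1 := Real.sign_of_neg (by rw [hneg]; linarith)
      rw [hs1, neg_one_mul, neg_lt, neg_zero] at hdrift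
      have hleft := slope_left_gt hdaT.neg (by simpa using hdrift)
      obtain ⟨s, h1, h2⟩ := (hev.and hleft).exists
      have := (abs_lt.mp h1).1
      have h2 : -a T < -a s := h2
      simp only [hneg] at h2
      -- h2 : -(-δ) < -(a s)
      have : a s < -δ := by linarith [h2]
      linarith [(abs_lt.mp h1).1]
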